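/- arXiv:1301.1872 — 2 statements merged into one kernel-verified Lean document; each statement's English description precedes it below -/
import Mathlib

section
/- Let n ≥ 2, α ∈ [0,N) and γ > 1 be such that αγ < N, and let Q ⊆ ℝ^{n+1} be a parabolic cylinder. Then there exists a constant c depending only on α, γ and n such that for every measurable function g with ‖g‖_{M^γ(Q)} < ∞, ‖M*_{α,Q}(g)‖_{M^{Nγ/(N−αγ)}(Q)} ≤ c ‖g‖_{M^γ(Q)}. -/
open MeasureTheory Set ENNReal

/-- The (backward) parabolic cylinder `Q_R(x₀,t₀) = B(x₀,R) × (t₀ - R², t₀) ⊆ ℝⁿ × ℝ`. -/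
def parabolicCylinder (n : ℕ) (x₀ : EuclideanSpace ℝ (Fin n)) (t₀ R : ℝ) :
    Set (EuclideanSpace ℝ (Fin n) × ℝ) :=
  (Metric.ball x₀ R) ×ˢ (Set.Ioo (t₀ - R ^ 2) t₀)

/-- `Q` is a parabolic cylinder. -/
def IsParabolicCylinder (n : ℕ) (Q : Set (EuclideanSpace ℝ (Fin n) × ℝ)) : Prop :=
  ∃ (x₀ : EuclideanSpace ℝ (Fin n)) (t₀ R : ℝ), 0 < R ∧ Q = parabolicCylinder n x₀ t₀ R

/-- The restricted fractional maximal operator of order `α ∈ [0, N]`, `N = n + 2`, relative to a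
parabolic cylinder `Q₀`:
`M*_{α,Q₀}(g)(p) = sup { |Q|^{α/N} ⨍_Q |g| : Q ⊆ Q₀ a parabolic cylinder with p ∈ Q }`. -/
noncomputable def parMaximal (n : ℕ) (α : ℝ) (Q₀ : Set (EuclideanSpace ℝ (Fin n) × ℝ))
    (g : EuclideanSpace ℝ (Fin n) × ℝ → ℝ) (p : EuclideanSpace ℝ (Fin n) × ℝ) : ℝ≥0∞ :=
  ⨆ (Q : Set (EuclideanSpace ℝ (Fin n) × ℝ)) (_ : IsParabolicCylinder n Q) (_ : Q ⊆ Q₀)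
    (_ : p ∈ Q),
      volume Q ^ (α / ((n : ℝ) + 2)) * ((volume Q)⁻¹ * ∫⁻ q in Q, ENNReal.ofReal |g q|)

/-- The Marcinkiewicz (weak-`L^γ`) quasinorm of an `ℝ≥0∞`-valued function `F` on `E`:
`‖F‖_{M^γ(E)} = ( sup_{λ>0} λ^γ |{p ∈ E : F p > λ}| )^{1/γ}`. -/
noncomputable def marcinkiewiczNormE {n : ℕ} (E : Set (EuclideanSpace ℝ (Fin n) × ℝ))
    (F : EuclideanSpace ℝ (Fin n) × ℝ → ℝ≥0∞) (γ : ℝ) : ℝ≥0∞ :=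
  (⨆ (l : ℝ) (_ : 0 < l),
    ENNReal.ofReal (l ^ γ) * volume {p ∈ E | ENNReal.ofReal l < F p}) ^ (1 / γ)

/-!
Write `N = n + 2`, `β = α / N`, and let `a` bound the weak-`L^γ` norm of `g`, so that
`|{|g| > t}| ≤ a^γ t^{-γ}`. At a level `l`, split `|g|` at a height `s` into the truncation
`min (|g|, s)` and the tail `|g| 1_{|g| > s}`. By the layer-cake formula, the fractional average
`|Q|^β ⨍_Q min (|g|, s)` is at most `a^{γβ} s^{1-γβ} / (1-γβ)` on every cylinder `Q ⊆ Q₀`, while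
`∫_{Q₀}` of the tail is at most `γ/(γ-1) a^γ s^{1-γ}`. Choosing `s` so that the first bound is
`l/2`, the set `{M* g > l}` lies in `{M*(tail) > l/2}`, whose measure the Vitali covering lemma for
parabolic cylinders bounds by `5^N (∫ tail / (l/2))^{1/(1-β)}`. Substituting `s` gives
`|{M* g > l}| ≲ (a / l)^{Nγ/(N-αγ)}`.
-/

theorem ENNReal.tsum_rpow_le_rpow_tsum {ι : Type*} (f : ι → ℝ≥0∞) {p : ℝ} (hp : 1 ≤ p) :
    ∑' i, f i ^ p ≤ (∑' i, f i) ^ p := by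
  have hsplit : ∀ x : ℝ≥0∞, x ^ p = x ^ (p - 1) * x := fun x => by
    conv_lhs => rw [← sub_add_cancel p 1]
    rw [ENNReal.rpow_add_of_nonneg _ _ (by linarith) zero_le_one, ENNReal.rpow_one]
  calc ∑' i, f i ^ p = ∑' i, f i ^ (p - 1) * f i := by simp_rw [hsplit]
    _ ≤ ∑' i, (∑' j, f j) ^ (p - 1) * f i := by
        gcongr with i
        exact ENNReal.le_tsum i
    _ = (∑' i, f i) ^ p := by rw [ENNReal.tsum_mul_left, ← hsplit]

theorem ENNReal.rpow_mul_inv_mul_eq_div {V : ℝ≥0∞} (hV0 : V ≠ 0) (hV : V ≠ ⊤) (β : ℝ) (I : ℝ≥0∞) :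
    V ^ β * (V⁻¹ * I) = I / V ^ (1 - β) := by
  rw [← ENNReal.rpow_neg_one, ← mul_assoc, ← ENNReal.rpow_add _ _ hV0 hV, div_eq_mul_inv,
    ← ENNReal.rpow_neg, neg_sub, sub_eq_add_neg, mul_comm]

theorem ENNReal.le_rpow_mul_rpow_of_le_of_le {x y z : ℝ≥0∞} {β : ℝ} (hβ0 : 0 ≤ β) (hβ1 : β ≤ 1)
    (hx : z ≤ x) (hy : z ≤ y) : z ≤ x ^ (1 - β) * y ^ β := by
  calc z = z ^ (1 - β) * z ^ β := by
        rw [← ENNReal.rpow_add_of_nonneg _ _ (by linarith) hβ0, sub_add_cancel, ENNReal.rpow_one]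
    _ ≤ x ^ (1 - β) * y ^ β := by gcongr

open Filter Topology in
theorem ENNReal.le_ofReal_mul_of_forall_lt {X A : ℝ≥0∞} {c : ℝ} (hc : 0 ≤ c) (hA : A ≠ ⊤)
    (h : ∀ a > A.toReal, X ≤ ENNReal.ofReal (c * a)) : X ≤ ENNReal.ofReal c * A := by
  rw [← ENNReal.ofReal_toReal hA, ← ENNReal.ofReal_mul hc]
  have hlim : Tendsto (fun a => ENNReal.ofReal (c * a)) (𝓝[>] A.toReal)
      (𝓝 (ENNReal.ofReal (c * A.toReal))) :=
    ((ENNReal.continuous_ofReal.comp (continuous_const.mul continuous_id)).tendsto _).mono_left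
      nhdsWithin_le_nhds
  exact ge_of_tendsto hlim (eventually_nhdsWithin_of_forall h)

theorem lintegral_Ioo_rpow {r s : ℝ} (hr : -1 < r) (hs : 0 ≤ s) :
    ∫⁻ t in Ioo 0 s, ENNReal.ofReal (t ^ r) = ENNReal.ofReal (s ^ (r + 1) / (r + 1)) := by
  have hint : IntegrableOn (fun t : ℝ => t ^ r) (Ioc 0 s) := by
    simpa [intervalIntegrable_iff, uIoc_of_le hs] using
      intervalIntegral.intervalIntegrable_rpow' (a := 0) (b := s) hr
  rw [Measure.restrict_congr_set Ioo_ae_eq_Ioc, ← ofReal_integral_eq_lintegral_ofReal hint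
    ((ae_restrict_mem measurableSet_Ioc).mono fun t ht => Real.rpow_nonneg ht.1.le r),
    ← intervalIntegral.integral_of_le hs, integral_rpow (.inl hr),
    Real.zero_rpow (by linarith), sub_zero]

theorem lintegral_Ioi_rpow {r s : ℝ} (hr : r < -1) (hs : 0 < s) :
    ∫⁻ t in Ioi s, ENNReal.ofReal (t ^ r) = ENNReal.ofReal (-s ^ (r + 1) / (r + 1)) := by
  rw [← ofReal_integral_eq_lintegral_ofReal (integrableOn_Ioi_rpow_of_lt hr hs)
    ((ae_restrict_mem measurableSet_Ioi).mono fun t ht => Real.rpow_nonneg (hs.trans ht).le r),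
    integral_Ioi_rpow_of_lt hr hs]

theorem abs_le_abs_min_add_abs_indicator {X : Type*} (f : X → ℝ) (s : ℝ) (x : X) :
    |f x| ≤ |min |f x| s| + |{y | s < |f y|}.indicator f x| := by
  by_cases hx : x ∈ {y | s < |f y|}
  · rw [indicator_of_mem hx]
    linarith [abs_nonneg (min |f x| s)]
  · rw [indicator_of_notMem hx, abs_zero, add_zero, min_eq_left (not_lt.1 hx), abs_abs]

section WeakType

variable {X : Type*} [MeasurableSpace X] {μ : Measure X} {E : Set X} {f : X → ℝ} {γ a : ℝ}

/-- The level set at height `t` has measure at most `min (μ Q, a^γ t^{-γ})`, and that minimum is at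
most `μ Q^{1-β} (a^γ t^{-γ})^β`, which is integrable on `(0, s)` since `γβ < 1`. -/
theorem rpow_mul_inv_mul_setLIntegral_min_le (hf : Measurable f) {Q : Set X} (hQE : Q ⊆ E)
    (hQ0 : μ Q ≠ 0) (hQ : μ Q ≠ ⊤) {β s : ℝ} (hβ0 : 0 ≤ β) (hβ1 : β ≤ 1) (hγβ : γ * β < 1)
    (ha : 0 ≤ a) (hs : 0 ≤ s)
    (hweak : ∀ t > 0, μ {x ∈ E | t < |f x|} ≤ ENNReal.ofReal (a ^ γ * t ^ (-γ))) :
    μ Q ^ β * ((μ Q)⁻¹ * ∫⁻ x in Q, ENNReal.ofReal (min |f x| s) ∂μ) ≤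
      ENNReal.ofReal (a ^ (γ * β) * s ^ (1 - γ * β) / (1 - γ * β)) := by
  have hQβ : μ Q ^ (1 - β) ≠ ⊤ := ENNReal.rpow_ne_top_of_nonneg (by linarith) hQ
  set F : ℝ → ℝ≥0∞ := fun t =>
    μ Q ^ (1 - β) * ENNReal.ofReal (a ^ (γ * β)) * ENNReal.ofReal (t ^ (-(γ * β)))
  have hlevel :
      ∀ t ∈ Ioi (0 : ℝ), μ.restrict Q {x | t < min |f x| s} ≤ (Ioo 0 s).indicator F t := by
    intro t (ht : 0 < t)
    rw [Measure.restrict_apply (measurableSet_lt measurable_const (hf.abs.min measurable_const))]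
    by_cases hts : t < s
    · rw [indicator_of_mem (show t ∈ Ioo 0 s from ⟨ht, hts⟩)]
      have hweak' : μ ({x | t < min |f x| s} ∩ Q) ≤ ENNReal.ofReal (a ^ γ * t ^ (-γ)) := by
        refine (measure_mono fun x hx => ?_).trans (hweak t ht)
        exact ⟨hQE hx.2, hx.1.trans_le (min_le_left _ _)⟩
      refine (ENNReal.le_rpow_mul_rpow_of_le_of_le hβ0 hβ1 (measure_mono inter_subset_right)
        hweak').trans_eq ?_
      rw [ENNReal.ofReal_rpow_of_nonneg (by positivity) hβ0, Real.mul_rpow (by positivity)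
        (by positivity), ← Real.rpow_mul ha, ← Real.rpow_mul ht.le, neg_mul,
        ENNReal.ofReal_mul (by positivity), ← mul_assoc]
    · have hempty : {x | t < min |f x| s} = ∅ :=
        eq_empty_of_forall_notMem fun x hx => hts (hx.trans_le (min_le_right _ _))
      rw [hempty]
      simp
  have hint : ∫⁻ t in Ioi 0, (Ioo 0 s).indicator F t ≤
      μ Q ^ (1 - β) * ENNReal.ofReal (a ^ (γ * β)) *
        ENNReal.ofReal (s ^ (1 - γ * β) / (1 - γ * β)) := by
    rw [lintegral_indicator measurableSet_Ioo, Measure.restrict_restrict measurableSet_Ioo]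
    refine (lintegral_mono_set inter_subset_left).trans_eq ?_
    rw [lintegral_const_mul' _ _ (mul_ne_top hQβ ofReal_ne_top),
      lintegral_Ioo_rpow (by linarith) hs, neg_add_eq_sub]
  calc μ Q ^ β * ((μ Q)⁻¹ * ∫⁻ x in Q, ENNReal.ofReal (min |f x| s) ∂μ)
      = (∫⁻ t in Ioi 0, μ.restrict Q {x | t < min |f x| s}) / μ Q ^ (1 - β) := by
        rw [ENNReal.rpow_mul_inv_mul_eq_div hQ0 hQ, lintegral_eq_lintegral_meas_lt _
          (.of_forall fun x => le_min (abs_nonneg _) hs) (hf.abs.min measurable_const).aemeasurable]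
    _ ≤ μ Q ^ (1 - β) * ENNReal.ofReal (a ^ (γ * β)) *
          ENNReal.ofReal (s ^ (1 - γ * β) / (1 - γ * β)) / μ Q ^ (1 - β) := by
        gcongr
        exact (setLIntegral_mono' measurableSet_Ioi hlevel).trans hint
    _ = ENNReal.ofReal (a ^ (γ * β) * s ^ (1 - γ * β) / (1 - γ * β)) := by
        rw [mul_assoc, mul_comm, ENNReal.mul_div_cancel_right
          (by simp [ENNReal.rpow_eq_zero_iff, hQ0, hQ]) hQβ, ← ENNReal.ofReal_mul (by positivity),
          mul_div_assoc]

theorem setLIntegral_indicator_le (hf : Measurable f) (hγ : 1 < γ) (ha : 0 ≤ a) {s : ℝ}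
    (hs : 0 < s) (hweak : ∀ t > 0, μ {x ∈ E | t < |f x|} ≤ ENNReal.ofReal (a ^ γ * t ^ (-γ))) :
    ∫⁻ x in E, ENNReal.ofReal |{x | s < |f x|}.indicator f x| ∂μ ≤
      ENNReal.ofReal (γ / (γ - 1) * a ^ γ * s ^ (1 - γ)) := by
  set T := {x | s < |f x|}
  have hTf : Measurable fun x => |T.indicator f x| :=
    (hf.indicator (measurableSet_lt measurable_const hf.abs)).abs
  have hlevel :
      ∀ t > 0, μ.restrict E {x | t < |T.indicator f x|} ≤ μ {x ∈ E | max s t < |f x|} := by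
    intro t ht
    rw [Measure.restrict_apply (measurableSet_lt measurable_const hTf)]
    refine measure_mono fun x ⟨hxt, hxE⟩ => ⟨hxE, ?_⟩
    change t < _ at hxt
    by_cases hx : x ∈ T
    · rw [indicator_of_mem hx] at hxt
      exact max_lt hx hxt
    · rw [indicator_of_notMem hx, abs_zero] at hxt
      linarith
  calc ∫⁻ x in E, ENNReal.ofReal |T.indicator f x| ∂μ
      = ∫⁻ t in Ioi 0, μ.restrict E {x | t < |T.indicator f x|} :=
        lintegral_eq_lintegral_meas_lt _ (.of_forall fun _ => abs_nonneg _) hTf.aemeasurable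
    _ = (∫⁻ t in Ioc 0 s, μ.restrict E {x | t < |T.indicator f x|}) +
          ∫⁻ t in Ioi s, μ.restrict E {x | t < |T.indicator f x|} := by
        rw [← Ioc_union_Ioi_eq_Ioi hs.le,
          lintegral_union measurableSet_Ioi (Ioc_disjoint_Ioi le_rfl)]
    _ ≤ (∫⁻ _ in Ioc 0 s, ENNReal.ofReal (a ^ γ * s ^ (-γ))) +
          ∫⁻ t in Ioi s, ENNReal.ofReal (a ^ γ) * ENNReal.ofReal (t ^ (-γ)) := by
        refine add_le_add (setLIntegral_mono' measurableSet_Ioc fun t ht => ?_)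
          (setLIntegral_mono' measurableSet_Ioi fun t ht => ?_)
        · have h := (hlevel t ht.1).trans (hweak _ (hs.trans_le (le_max_left _ _)))
          rwa [max_eq_left ht.2] at h
        · have h := (hlevel t (hs.trans ht)).trans (hweak _ (hs.trans_le (le_max_left _ _)))
          rwa [max_eq_right (mem_Ioi.1 ht).le, ENNReal.ofReal_mul (by positivity)] at h
    _ = ENNReal.ofReal (a ^ γ * s ^ (-γ)) * ENNReal.ofReal s +
          ENNReal.ofReal (a ^ γ) * ENNReal.ofReal (-s ^ (-γ + 1) / (-γ + 1)) := by
        rw [setLIntegral_const, Real.volume_Ioc, sub_zero, lintegral_const_mul' _ _ ofReal_ne_top,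
          lintegral_Ioi_rpow (by linarith) hs]
    _ = ENNReal.ofReal (γ / (γ - 1) * a ^ γ * s ^ (1 - γ)) := by
        have hγ' : -γ + 1 < 0 := by linarith
        have hγ₁ : γ - 1 ≠ 0 := by linarith
        have hγ₂ : -γ + 1 ≠ 0 := by linarith
        rw [← ENNReal.ofReal_mul (by positivity), ← ENNReal.ofReal_mul (by positivity),
          ← ENNReal.ofReal_add (by positivity) (mul_nonneg (by positivity)
            (div_nonneg_of_nonpos (neg_nonpos.2 (by positivity)) hγ'.le)),
          show 1 - γ = -γ + 1 by ring, Real.rpow_add_one hs.ne']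
        congr 1
        field_simp
        ring

end WeakType

section Geometry

variable {n : ℕ}

theorem volume_parabolicCylinder (x : EuclideanSpace ℝ (Fin n)) (t : ℝ) {R : ℝ} (hR : 0 < R) :
    volume (parabolicCylinder n x t R) =
      ENNReal.ofReal (R ^ (n + 2)) * volume (Metric.ball (0 : EuclideanSpace ℝ (Fin n)) 1) := by
  rw [parabolicCylinder, Measure.volume_eq_prod, Measure.prod_prod,
    Measure.addHaar_ball_of_pos _ _ hR, Real.volume_Ioo, finrank_euclideanSpace, Fintype.card_fin,
    sub_sub_self, mul_right_comm, ← ENNReal.ofReal_mul (by positivity), ← pow_add]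

theorem volume_parabolicCylinder_ne_top (x : EuclideanSpace ℝ (Fin n)) (t : ℝ) {R : ℝ}
    (hR : 0 < R) : volume (parabolicCylinder n x t R) ≠ ⊤ := by
  rw [volume_parabolicCylinder x t hR]
  exact mul_ne_top ofReal_ne_top measure_ball_lt_top.ne

theorem isOpen_parabolicCylinder (x : EuclideanSpace ℝ (Fin n)) (t R : ℝ) :
    IsOpen (parabolicCylinder n x t R) :=
  Metric.isOpen_ball.prod isOpen_Ioo

theorem measurableSet_parabolicCylinder (x : EuclideanSpace ℝ (Fin n)) (t R : ℝ) :
    MeasurableSet (parabolicCylinder n x t R) :=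
  (isOpen_parabolicCylinder x t R).measurableSet

theorem nonempty_parabolicCylinder (x : EuclideanSpace ℝ (Fin n)) (t : ℝ) {R : ℝ} (hR : 0 < R) :
    (parabolicCylinder n x t R).Nonempty :=
  (Metric.nonempty_ball.2 hR).prod (nonempty_Ioo.2 (by linarith [pow_pos hR 2]))

theorem volume_parabolicCylinder_pos (x : EuclideanSpace ℝ (Fin n)) (t : ℝ) {R : ℝ}
    (hR : 0 < R) : 0 < volume (parabolicCylinder n x t R) :=
  (isOpen_parabolicCylinder x t R).measure_pos _ (nonempty_parabolicCylinder x t hR)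

theorem volume_parabolicCylinder_mul (x : EuclideanSpace ℝ (Fin n)) (t t' : ℝ) {c R : ℝ}
    (hc : 0 < c) (hR : 0 < R) :
    volume (parabolicCylinder n x t' (c * R)) =
      ENNReal.ofReal (c ^ (n + 2)) * volume (parabolicCylinder n x t R) := by
  rw [volume_parabolicCylinder _ _ (mul_pos hc hR), volume_parabolicCylinder _ _ hR, ← mul_assoc,
    ← ENNReal.ofReal_mul (by positivity), mul_pow]

theorem le_of_parabolicCylinder_subset {x x₀ : EuclideanSpace ℝ (Fin n)} {t t₀ R R₀ : ℝ}
    (hR : 0 < R) (hR₀ : 0 < R₀) (h : parabolicCylinder n x t R ⊆ parabolicCylinder n x₀ t₀ R₀) :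
    R ≤ R₀ := by
  have hI : t - R ^ 2 < t := by linarith [pow_pos hR 2]
  obtain ⟨-, hIoo⟩ := (prod_subset_prod_iff.1 h).resolve_right
    (by simp [(Metric.nonempty_ball.2 hR).ne_empty, (nonempty_Ioo.2 hI).ne_empty])
  obtain ⟨h₁, h₂⟩ := (Ioo_subset_Ioo_iff hI).1 hIoo
  nlinarith

/-- The enlargement is shifted forward in time by `4R₂²` because the cylinders extend only backward
in time from their top. -/
theorem parabolicCylinder_subset_enlarge {x₁ x₂ : EuclideanSpace ℝ (Fin n)} {t₁ t₂ R₁ R₂ : ℝ}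
    (hR₁ : 0 < R₁) (hR₁₂ : R₁ ≤ 2 * R₂)
    (hne : (parabolicCylinder n x₁ t₁ R₁ ∩ parabolicCylinder n x₂ t₂ R₂).Nonempty) :
    parabolicCylinder n x₁ t₁ R₁ ⊆ parabolicCylinder n x₂ (t₂ + 4 * R₂ ^ 2) (5 * R₂) := by
  obtain ⟨⟨y, τ⟩, ⟨hy₁, hτ₁⟩, ⟨hy₂, hτ₂⟩⟩ := hne
  rintro ⟨z, σ⟩ ⟨hz, hσ⟩
  simp only [parabolicCylinder, Metric.mem_ball, mem_Ioo, mem_prod] at *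
  refine ⟨?_, by nlinarith, by nlinarith⟩
  calc dist z x₂ ≤ dist z x₁ + dist x₁ y + dist y x₂ := dist_triangle4 ..
    _ < 5 * R₂ := by linarith [dist_comm x₁ y]

theorem exists_disjoint_subfamily_covering_parabolicCylinder {ι : Type*} (s : Set ι)
    (x : ι → EuclideanSpace ℝ (Fin n)) (t R : ι → ℝ) (hR : ∀ i ∈ s, 0 < R i) {R₀ : ℝ}
    (hR₀ : ∀ i ∈ s, R i ≤ R₀) :
    ∃ u ⊆ s, u.PairwiseDisjoint (fun i => parabolicCylinder n (x i) (t i) (R i)) ∧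
      ⋃ i ∈ s, parabolicCylinder n (x i) (t i) (R i) ⊆
        ⋃ i ∈ u, parabolicCylinder n (x i) (t i + 4 * R i ^ 2) (5 * R i) := by
  obtain ⟨u, hus, hdisj, hcover⟩ := Vitali.exists_disjoint_subfamily_covering_enlargement
    (fun i => parabolicCylinder n (x i) (t i) (R i)) s R 2 one_lt_two
    (fun i hi => (hR i hi).le) R₀ hR₀ (fun i hi => nonempty_parabolicCylinder _ _ (hR i hi))
  refine ⟨u, hus, hdisj, iUnion₂_subset fun i hi => ?_⟩
  obtain ⟨j, hju, hij, hRij⟩ := hcover i hi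
  exact (parabolicCylinder_subset_enlarge (hR i hi) hRij hij).trans <| subset_biUnion_of_mem
    (u := fun i => parabolicCylinder n (x i) (t i + 4 * R i ^ 2) (5 * R i)) hju

end Geometry

section Marcinkiewicz

variable {n : ℕ} {E : Set (EuclideanSpace ℝ (Fin n) × ℝ)}

theorem volume_lt_abs_le_of_marcinkiewiczNormE_le {g : EuclideanSpace ℝ (Fin n) × ℝ → ℝ}
    {γ a : ℝ} (hγ : 0 < γ) (ha : 0 ≤ a)
    (hg : marcinkiewiczNormE E (fun p => ENNReal.ofReal |g p|) γ ≤ ENNReal.ofReal a) {t : ℝ}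
    (ht : 0 < t) : volume {p ∈ E | t < |g p|} ≤ ENNReal.ofReal (a ^ γ * t ^ (-γ)) := by
  rw [marcinkiewiczNormE, one_div, ENNReal.rpow_inv_le_iff hγ,
    ENNReal.ofReal_rpow_of_nonneg ha hγ.le] at hg
  have h := (le_iSup₂_of_le (f := fun (l : ℝ) (_ : 0 < l) => ENNReal.ofReal (l ^ γ) *
    volume {p ∈ E | ENNReal.ofReal l < ENNReal.ofReal |g p|}) t ht le_rfl).trans hg
  simp only [ENNReal.ofReal_lt_ofReal_iff_of_nonneg ht.le] at h
  rwa [Real.rpow_neg ht.le, ← div_eq_mul_inv, ENNReal.ofReal_div_of_pos (by positivity),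
    ENNReal.le_div_iff_mul_le (.inl (by simp; positivity)) (.inl ofReal_ne_top), mul_comm]

theorem marcinkiewiczNormE_le {F : EuclideanSpace ℝ (Fin n) × ℝ → ℝ≥0∞} {γ : ℝ} (hγ : 0 < γ)
    {B : ℝ≥0∞} (h : ∀ l > 0, ENNReal.ofReal (l ^ γ) * volume {p ∈ E | ENNReal.ofReal l < F p} ≤ B) :
    marcinkiewiczNormE E F γ ≤ B ^ (1 / γ) :=
  ENNReal.rpow_le_rpow (iSup₂_le h) (by positivity)

end Marcinkiewicz

noncomputable def maximalConst (n : ℕ) (β γ : ℝ) : ℝ :=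
  5 ^ (n + 2) * (γ * (1 - γ * β) / (γ - 1)) ^ (1 - β)⁻¹ * (2 / (1 - γ * β)) ^ (γ / (1 - γ * β))

theorem maximalConst_pos (n : ℕ) {β γ : ℝ} (hγ : 1 < γ) (hγβ : γ * β < 1) :
    0 < maximalConst n β γ := by
  have : 0 < γ - 1 := by linarith
  have : 0 < 1 - γ * β := by linarith
  unfold maximalConst
  positivity

/-- With `r = 1 - γβ`, the level `l = 2aσ^r/r` and the truncation height `s = aσ` make the
truncated part contribute exactly `l/2`; this identity evaluates the resulting bound
`l^{γ/r} · 5^N (γ/(γ-1) a^γ s^{1-γ} / (l/2))^{1/(1-β)}`. -/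
theorem maximalConst_spec (n : ℕ) {β γ a σ : ℝ} (hβ : β < 1) (hγ : 1 < γ) (hγβ : γ * β < 1)
    (ha : 0 < a) (hσ : 0 < σ) :
    (2 * (a * σ ^ (1 - γ * β) / (1 - γ * β))) ^ (γ / (1 - γ * β)) * (5 ^ (n + 2) *
        (γ / (γ - 1) * a ^ γ * (a * σ) ^ (1 - γ) / (a * σ ^ (1 - γ * β) / (1 - γ * β))) ^
          (1 - β)⁻¹) =
      maximalConst n β γ * a ^ (γ / (1 - γ * β)) := by
  set r := 1 - γ * β with hr_def
  have hr : 0 < r := by linarith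
  have hβ' : 0 < 1 - β := by linarith
  have htail : γ / (γ - 1) * a ^ γ * (a * σ) ^ (1 - γ) / (a * σ ^ r / r) =
      γ * r / (γ - 1) * σ ^ (-(γ * (1 - β))) := by
    have ha' : a ^ γ * a ^ (1 - γ) = a := by rw [← Real.rpow_add ha, add_sub_cancel, Real.rpow_one]
    have hσ' : σ ^ (1 - γ) = σ ^ (-(γ * (1 - β))) * σ ^ r := by
      rw [← Real.rpow_add hσ, hr_def]
      ring_nf
    have hγ' : γ - 1 ≠ 0 := by linarith
    rw [Real.mul_rpow ha.le hσ.le, hσ']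
    field_simp
    exact ha'
  have hlevel : (2 * (a * σ ^ r / r)) ^ (γ / r) = (2 / r) ^ (γ / r) * a ^ (γ / r) * σ ^ γ := by
    rw [show 2 * (a * σ ^ r / r) = 2 / r * a * σ ^ r by ring, Real.mul_rpow (by positivity)
      (by positivity), Real.mul_rpow (by positivity) ha.le, ← Real.rpow_mul hσ.le,
      mul_div_cancel₀ _ hr.ne']
  rw [htail, hlevel, Real.mul_rpow (by positivity) (by positivity), ← Real.rpow_mul hσ.le,
    neg_mul, mul_inv_cancel_right₀ hβ'.ne', Real.rpow_neg hσ.le, maximalConst, ← hr_def]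
  field_simp

section Maximal

variable {n : ℕ} {α : ℝ} {Q₀ : Set (EuclideanSpace ℝ (Fin n) × ℝ)}
  {g : EuclideanSpace ℝ (Fin n) × ℝ → ℝ} {p : EuclideanSpace ℝ (Fin n) × ℝ}

theorem le_parMaximal {Q : Set (EuclideanSpace ℝ (Fin n) × ℝ)} (hQ : IsParabolicCylinder n Q)
    (hQ₀ : Q ⊆ Q₀) (hp : p ∈ Q) :
    volume Q ^ (α / ((n : ℝ) + 2)) * ((volume Q)⁻¹ * ∫⁻ q in Q, ENNReal.ofReal |g q|) ≤
      parMaximal n α Q₀ g p :=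
  le_iSup_of_le Q <| le_iSup_of_le hQ <| le_iSup_of_le hQ₀ <| le_iSup_of_le hp le_rfl

theorem lt_parMaximal_iff {c : ℝ≥0∞} :
    c < parMaximal n α Q₀ g p ↔ ∃ Q, IsParabolicCylinder n Q ∧ Q ⊆ Q₀ ∧ p ∈ Q ∧
      c < volume Q ^ (α / ((n : ℝ) + 2)) * ((volume Q)⁻¹ * ∫⁻ q in Q, ENNReal.ofReal |g q|) := by
  simp only [parMaximal, lt_iSup_iff, exists_prop]

theorem parMaximal_le_add {g₁ g₂ : EuclideanSpace ℝ (Fin n) × ℝ → ℝ} (hg₁ : Measurable g₁)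
    (h : ∀ q, |g q| ≤ |g₁ q| + |g₂ q|) :
    parMaximal n α Q₀ g p ≤ parMaximal n α Q₀ g₁ p + parMaximal n α Q₀ g₂ p := by
  refine iSup_le fun Q => iSup_le fun hQ => iSup_le fun hQ₀ => iSup_le fun hp => ?_
  calc volume Q ^ (α / ((n : ℝ) + 2)) * ((volume Q)⁻¹ * ∫⁻ q in Q, ENNReal.ofReal |g q|)
      ≤ volume Q ^ (α / ((n : ℝ) + 2)) * ((volume Q)⁻¹ *
          ((∫⁻ q in Q, ENNReal.ofReal |g₁ q|) + ∫⁻ q in Q, ENNReal.ofReal |g₂ q|)) := by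
        rw [← lintegral_add_left hg₁.abs.ennreal_ofReal]
        gcongr with q
        exact (ENNReal.ofReal_le_ofReal (h q)).trans ENNReal.ofReal_add_le
    _ = volume Q ^ (α / ((n : ℝ) + 2)) * ((volume Q)⁻¹ * ∫⁻ q in Q, ENNReal.ofReal |g₁ q|) +
          volume Q ^ (α / ((n : ℝ) + 2)) * ((volume Q)⁻¹ * ∫⁻ q in Q, ENNReal.ofReal |g₂ q|) := by
        ring
    _ ≤ parMaximal n α Q₀ g₁ p + parMaximal n α Q₀ g₂ p :=
        add_le_add (le_parMaximal hQ hQ₀ hp) (le_parMaximal hQ hQ₀ hp)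

theorem parMaximal_min_abs_le {γ a s : ℝ} (hα0 : 0 ≤ α) (hα : α ≤ n + 2)
    (hγα : γ * (α / ((n : ℝ) + 2)) < 1) (hg : Measurable g) (ha : 0 ≤ a) (hs : 0 ≤ s)
    (hweak : ∀ t > 0, volume {p ∈ Q₀ | t < |g p|} ≤ ENNReal.ofReal (a ^ γ * t ^ (-γ))) :
    parMaximal n α Q₀ (fun q => min |g q| s) p ≤
      ENNReal.ofReal (a ^ (γ * (α / ((n : ℝ) + 2))) * s ^ (1 - γ * (α / ((n : ℝ) + 2))) /
        (1 - γ * (α / ((n : ℝ) + 2)))) := by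
  have habs : ∀ q, |min |g q| s| = min |g q| s := fun q => abs_of_nonneg (le_min (abs_nonneg _) hs)
  refine iSup_le fun Q => iSup_le fun hQ => iSup_le fun hQ₀ => iSup_le fun _ => ?_
  obtain ⟨x, t, R, hR, rfl⟩ := hQ
  simp only [habs]
  exact rpow_mul_inv_mul_setLIntegral_min_le hg hQ₀ (volume_parabolicCylinder_pos x t hR).ne'
    (volume_parabolicCylinder_ne_top x t hR) (by positivity)
    (div_le_one_of_le₀ hα (by positivity)) hγα ha hs hweak

theorem exists_parabolicCylinder_of_lt_parMaximal (hα : α < n + 2) {c : ℝ≥0∞} (hc0 : c ≠ 0)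
    (hc : c ≠ ⊤) (hp : c < parMaximal n α Q₀ g p) :
    ∃ x t R, 0 < R ∧ parabolicCylinder n x t R ⊆ Q₀ ∧ p ∈ parabolicCylinder n x t R ∧
      volume (parabolicCylinder n x t R) ≤
        ((∫⁻ q in parabolicCylinder n x t R, ENNReal.ofReal |g q|) / c) ^
          (1 - α / ((n : ℝ) + 2))⁻¹ := by
  obtain ⟨_, ⟨x, t, R, hR, rfl⟩, hsub, hpQ, hlt⟩ := lt_parMaximal_iff.1 hp
  refine ⟨x, t, R, hR, hsub, hpQ, ?_⟩
  rw [ENNReal.rpow_mul_inv_mul_eq_div (volume_parabolicCylinder_pos x t hR).ne'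
    (volume_parabolicCylinder_ne_top x t hR)] at hlt
  rw [ENNReal.le_rpow_inv_iff (by rw [sub_pos, div_lt_one (by positivity)]; exact hα),
    ENNReal.le_div_iff_mul_le (.inl hc0) (.inl hc), mul_comm]
  exact (ENNReal.mul_lt_of_lt_div hlt).le

/-- Summing the volume bound of `exists_parabolicCylinder_of_lt_parMaximal` over a disjoint
Vitali subfamily uses the superadditivity of `x ↦ x^{1/(1-β)}`. -/
theorem volume_lt_parMaximal_le (hα0 : 0 ≤ α) (hα : α < n + 2) (hQ₀ : IsParabolicCylinder n Q₀)
    {c : ℝ≥0∞} (hc0 : c ≠ 0) (hc : c ≠ ⊤) :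
    volume {p | c < parMaximal n α Q₀ g p} ≤
      ENNReal.ofReal (5 ^ (n + 2)) *
        ((∫⁻ q in Q₀, ENNReal.ofReal |g q|) / c) ^ (1 - α / ((n : ℝ) + 2))⁻¹ := by
  obtain ⟨x₀, t₀, R₀, hR₀, rfl⟩ := hQ₀
  set β := α / ((n : ℝ) + 2)
  have hβ : 0 < 1 - β := by rw [sub_pos, div_lt_one (by positivity)]; exact hα
  set S := {p | c < parMaximal n α (parabolicCylinder n x₀ t₀ R₀) g p}
  choose! x t R hR hsub hmem hvol using
    fun p (hp : p ∈ S) => exists_parabolicCylinder_of_lt_parMaximal hα hc0 hc hp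
  set P := fun p => parabolicCylinder n (x p) (t p) (R p)
  obtain ⟨u, huS, hdisj, hcover⟩ := exists_disjoint_subfamily_covering_parabolicCylinder S x t R hR
    (fun p hp => le_of_parabolicCylinder_subset (hR p hp) hR₀ (hsub p hp))
  have hu : u.Countable := hdisj.countable_of_isOpen (fun _ _ => isOpen_parabolicCylinder _ _ _)
    (fun p hp => nonempty_parabolicCylinder _ _ (hR p (huS hp)))
  calc volume S ≤ volume (⋃ p ∈ u, parabolicCylinder n (x p) (t p + 4 * R p ^ 2) (5 * R p)) :=
        measure_mono fun p hp => hcover (mem_biUnion hp (hmem p hp))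
    _ ≤ ∑' p : u, volume (parabolicCylinder n (x p) (t p + 4 * R p ^ 2) (5 * R p)) :=
        measure_biUnion_le _ hu _
    _ = ENNReal.ofReal (5 ^ (n + 2)) * ∑' p : u, volume (P p) := by
        rw [← ENNReal.tsum_mul_left]
        exact tsum_congr fun p => volume_parabolicCylinder_mul _ _ _ (by norm_num) (hR p (huS p.2))
    _ ≤ ENNReal.ofReal (5 ^ (n + 2)) *
          ∑' p : u, ((∫⁻ q in P p, ENNReal.ofReal |g q|) / c) ^ (1 - β)⁻¹ := by
        gcongr with p
        exact hvol p (huS p.2)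
    _ ≤ ENNReal.ofReal (5 ^ (n + 2)) *
          (∑' p : u, (∫⁻ q in P p, ENNReal.ofReal |g q|) / c) ^ (1 - β)⁻¹ := by
        gcongr
        exact ENNReal.tsum_rpow_le_rpow_tsum _ (one_le_inv₀ hβ |>.2 (sub_le_self _ (by positivity)))
    _ ≤ ENNReal.ofReal (5 ^ (n + 2)) *
          ((∫⁻ q in parabolicCylinder n x₀ t₀ R₀, ENNReal.ofReal |g q|) / c) ^ (1 - β)⁻¹ := by
        simp_rw [P, div_eq_mul_inv, ENNReal.tsum_mul_right,
          ← lintegral_biUnion hu (fun _ _ => measurableSet_parabolicCylinder _ _ _) hdisj]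
        gcongr
        exact iUnion₂_subset fun p hp => hsub p (huS hp)

theorem setOf_lt_parMaximal_subset (hg : Measurable g) {s c : ℝ} (hc : 0 ≤ c)
    (htrunc : ∀ p, parMaximal n α Q₀ (fun q => min |g q| s) p ≤ ENNReal.ofReal c) :
    {p | ENNReal.ofReal (2 * c) < parMaximal n α Q₀ g p} ⊆
      {p | ENNReal.ofReal c < parMaximal n α Q₀ ({q | s < |g q|}.indicator g) p} := by
  intro p (hp : ENNReal.ofReal (2 * c) < _)
  have hsub := parMaximal_le_add (α := α) (Q₀ := Q₀) (p := p) (hg.abs.min measurable_const)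
    (abs_le_abs_min_add_abs_indicator g s)
  rw [two_mul, ENNReal.ofReal_add hc hc] at hp
  exact lt_of_add_lt_add_left (hp.trans_le (hsub.trans (add_le_add (htrunc p) le_rfl)))

theorem distribution_parMaximal_le {γ a l : ℝ} (hα0 : 0 ≤ α) (hγ : 1 < γ)
    (hγα : γ * (α / ((n : ℝ) + 2)) < 1) (hQ₀ : IsParabolicCylinder n Q₀) (hg : Measurable g)
    (ha : 0 < a) (hweak : ∀ t > 0, volume {p ∈ Q₀ | t < |g p|} ≤ ENNReal.ofReal (a ^ γ * t ^ (-γ)))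
    (hl : 0 < l) :
    ENNReal.ofReal (l ^ (γ / (1 - γ * (α / ((n : ℝ) + 2))))) *
        volume {p ∈ Q₀ | ENNReal.ofReal l < parMaximal n α Q₀ g p} ≤
      ENNReal.ofReal (maximalConst n (α / ((n : ℝ) + 2)) γ *
        a ^ (γ / (1 - γ * (α / ((n : ℝ) + 2))))) := by
  set β := α / ((n : ℝ) + 2)
  set r := 1 - γ * β with hr_def
  have hβ0 : 0 ≤ β := by positivity
  have hβ1 : β < 1 := by nlinarith
  have hα : α < n + 2 := (div_lt_one (by positivity)).1 hβ1
  have hr : 0 < r := by linarith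
  obtain ⟨σ, hσ, rfl⟩ : ∃ σ > 0, l = 2 * (a * σ ^ r / r) :=
    ⟨(r * l / (2 * a)) ^ r⁻¹, by positivity, by
      rw [← Real.rpow_mul (by positivity), inv_mul_cancel₀ hr.ne', Real.rpow_one]; field_simp⟩
  set c := a * σ ^ r / r
  have htrunc : ∀ p, parMaximal n α Q₀ (fun q => min |g q| (a * σ)) p ≤ ENNReal.ofReal c := by
    intro p
    refine (parMaximal_min_abs_le hα0 hα.le hγα hg ha.le (by positivity) hweak).trans_eq ?_
    rw [Real.mul_rpow ha.le hσ.le, ← mul_assoc, ← Real.rpow_add ha, show γ * β + r = 1 by linarith,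
      Real.rpow_one]
  calc ENNReal.ofReal ((2 * c) ^ (γ / r)) *
        volume {p ∈ Q₀ | ENNReal.ofReal (2 * c) < parMaximal n α Q₀ g p}
      ≤ ENNReal.ofReal ((2 * c) ^ (γ / r)) * (ENNReal.ofReal (5 ^ (n + 2)) *
          ((∫⁻ q in Q₀, ENNReal.ofReal |{q | a * σ < |g q|}.indicator g q|) / ENNReal.ofReal c) ^
            (1 - β)⁻¹) := by
        gcongr
        refine (measure_mono fun p hp => ?_).trans
          (volume_lt_parMaximal_le hα0 hα hQ₀ (by simp; positivity) ofReal_ne_top)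
        exact setOf_lt_parMaximal_subset hg (by positivity) htrunc hp.2
    _ ≤ ENNReal.ofReal ((2 * c) ^ (γ / r)) * (ENNReal.ofReal (5 ^ (n + 2)) *
          (ENNReal.ofReal (γ / (γ - 1) * a ^ γ * (a * σ) ^ (1 - γ)) / ENNReal.ofReal c) ^
            (1 - β)⁻¹) := by
        gcongr
        exact setLIntegral_indicator_le hg hγ ha.le (by positivity) hweak
    _ = ENNReal.ofReal (maximalConst n β γ * a ^ (γ / r)) := by
        rw [← maximalConst_spec n hβ1 hγ hγα ha hσ, ← ENNReal.ofReal_div_of_pos (by positivity),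
          ENNReal.ofReal_rpow_of_nonneg (by positivity) (by positivity),
          ← ENNReal.ofReal_mul (by positivity), ← ENNReal.ofReal_mul (by positivity)]

theorem marcinkiewiczNormE_parMaximal_le {γ a : ℝ} (hα0 : 0 ≤ α) (hγ : 1 < γ)
    (hγα : γ * (α / ((n : ℝ) + 2)) < 1) (hQ₀ : IsParabolicCylinder n Q₀) (hg : Measurable g)
    (ha : 0 < a)
    (hgA : marcinkiewiczNormE Q₀ (fun p => ENNReal.ofReal |g p|) γ ≤ ENNReal.ofReal a) :
    marcinkiewiczNormE Q₀ (parMaximal n α Q₀ g) (γ / (1 - γ * (α / ((n : ℝ) + 2)))) ≤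
      ENNReal.ofReal (maximalConst n (α / ((n : ℝ) + 2)) γ ^
        (1 / (γ / (1 - γ * (α / ((n : ℝ) + 2))))) * a) := by
  set q := γ / (1 - γ * (α / ((n : ℝ) + 2)))
  have hq : 0 < q := div_pos (by linarith) (by linarith)
  have hK := maximalConst_pos n hγ hγα
  have hweak t (ht : 0 < t) := volume_lt_abs_le_of_marcinkiewiczNormE_le (by linarith) ha.le hgA ht
  refine (marcinkiewiczNormE_le hq fun l hl =>
    distribution_parMaximal_le hα0 hγ hγα hQ₀ hg ha hweak hl).trans_eq ?_
  rw [ENNReal.ofReal_rpow_of_nonneg (by positivity) (by positivity),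
    Real.mul_rpow (by positivity) (by positivity), ← Real.rpow_mul ha.le, mul_one_div_cancel hq.ne',
    Real.rpow_one]

end Maximal

theorem maximal_marcinkiewicz_bound_general (n : ℕ) (α γ : ℝ)
    (hα0 : 0 ≤ α) (hγ : 1 < γ) (hαγ : α * γ < (n : ℝ) + 2) :
    ∃ c : ℝ, 0 < c ∧
      ∀ Q : Set (EuclideanSpace ℝ (Fin n) × ℝ), IsParabolicCylinder n Q →
      ∀ g : EuclideanSpace ℝ (Fin n) × ℝ → ℝ, Measurable g →
        marcinkiewiczNormE Q (fun p => ENNReal.ofReal |g p|) γ < ⊤ →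
        marcinkiewiczNormE Q (parMaximal n α Q g)
            (((n : ℝ) + 2) * γ / (((n : ℝ) + 2) - α * γ)) ≤
          ENNReal.ofReal c * marcinkiewiczNormE Q (fun p => ENNReal.ofReal |g p|) γ := by
  have hγα : γ * (α / ((n : ℝ) + 2)) < 1 := by
    rwa [mul_div_assoc', div_lt_one (by positivity), mul_comm]
  have hq : ((n : ℝ) + 2) * γ / (((n : ℝ) + 2) - α * γ) = γ / (1 - γ * (α / ((n : ℝ) + 2))) := by
    have : ((n : ℝ) + 2) - α * γ ≠ 0 := by linarith
    field_simp
  set q := γ / (1 - γ * (α / ((n : ℝ) + 2)))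
  have hc := Real.rpow_pos_of_pos (maximalConst_pos n hγ hγα) (1 / q)
  refine ⟨_, hc, fun Q₀ hQ₀ g hg hfin => ?_⟩
  rw [hq]
  refine ENNReal.le_ofReal_mul_of_forall_lt hc.le hfin.ne fun a ha => ?_
  have ha0 : 0 < a := ENNReal.toReal_nonneg.trans_lt ha
  exact marcinkiewiczNormE_parMaximal_le hα0 hγ hγα hQ₀ hg ha0
    ((ENNReal.le_ofReal_iff_toReal_le hfin.ne ha0.le).2 ha.le)

/-- Marcinkiewicz space boundedness of the restricted fractional maximal
operator: for `α ∈ [0,N)`, `γ > 1` with `αγ < N` (`N = n + 2`) there exists `c = c(α,γ,n)`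
such that on every parabolic cylinder `Q`,
`‖M*_{α,Q}(g)‖_{M^{Nγ/(N-αγ)}(Q)} ≤ c ‖g‖_{M^γ(Q)}`. -/
theorem maximal_marcinkiewicz_bound (n : ℕ) (hn : 2 ≤ n) (α γ : ℝ)
    (hα0 : 0 ≤ α) (hαN : α < (n : ℝ) + 2) (hγ : 1 < γ) (hαγ : α * γ < (n : ℝ) + 2) :
    ∃ c : ℝ, 0 < c ∧
      ∀ Q : Set (EuclideanSpace ℝ (Fin n) × ℝ), IsParabolicCylinder n Q →
      ∀ g : EuclideanSpace ℝ (Fin n) × ℝ → ℝ, Measurable g →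
        marcinkiewiczNormE Q (fun p => ENNReal.ofReal |g p|) γ < ⊤ →
        marcinkiewiczNormE Q (parMaximal n α Q g)
            (((n : ℝ) + 2) * γ / (((n : ℝ) + 2) - α * γ)) ≤
          ENNReal.ofReal c * marcinkiewiczNormE Q (fun p => ENNReal.ofReal |g p|) γ :=
  maximal_marcinkiewicz_bound_general n α γ hα0 hγ hαγ
end

section
/- (Level-set iteration lemma.) Let V > 0, m > 0, B > 1, λ₁ > 0, ε > 0 and c ≥ 0, and let μ₁ : (0,∞) → [0,V] and μ₂ : (0,∞) → [0,∞] be nonincreasing functions. Assume that for every integer k ≥ 0, B^{m(k+1)} λ₁^m μ₁(B^{k+1} λ₁) ≤ (1/4) B^{mk} λ₁^m μ₁(B^{k} λ₁) + c B^{mk} (ε λ₁)^m μ₂(B^{k} ε λ₁). Then for every β ∈ (0,∞) there exists a constant C, depending only on β, m, B and c, such that ∫₀^∞ ( λ^m μ₁(λ) )^{β/m} dλ/λ ≤ C ( λ₁^β V^{β/m} + ∫₀^∞ ( λ^m μ₂(λ) )^{β/m} dλ/λ ). -/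
open MeasureTheory Set ENNReal

/-!
With `γ = β / m`, write both integrals as `∫ λ^β h(λ) dλ/λ` with `h = μ^γ`. Below `λ₁` the
bound `μ₁ ≤ V` gives at most `λ₁^β V^γ / β`. Above `λ₁`, cut the half-line into the geometric
shells `[λ₁ B^k, λ₁ B^(k+1))`: by monotonicity the integral over a shell is at most a fixed
multiple of `a_k^γ`, where `a_k = (λ₁ B^k)^m μ₁(λ₁ B^k)`, and conversely each `μ₂`-term `d_k^γ`
of the hypothesis is at most a fixed multiple of the `μ₂`-integral over one shell. Raising the
hypothesis to the power `γ` gives `a_{k+1}^γ ≤ 2^(-γ) a_k^γ + 2^γ d_k^γ`; summing over `k` and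
absorbing the factor `2^(-γ) < 1` bounds `∑ a_k^γ` by `a_0^γ ≤ λ₁^β V^γ` plus `∑ d_k^γ`.
-/

namespace ENNReal

theorem add_rpow_le_two_rpow_mul (x y : ℝ≥0∞) {γ : ℝ} (hγ : 0 ≤ γ) :
    (x + y) ^ γ ≤ 2 ^ γ * (x ^ γ + y ^ γ) :=
  calc (x + y) ^ γ ≤ (2 * max x y) ^ γ := by
        gcongr
        rw [two_mul]
        exact add_le_add (le_max_left x y) (le_max_right x y)
    _ = 2 ^ γ * max (x ^ γ) (y ^ γ) := by
        rw [mul_rpow_of_nonneg _ _ hγ, (monotone_rpow_of_nonneg hγ).map_max]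
    _ ≤ 2 ^ γ * (x ^ γ + y ^ γ) := by gcongr; exact max_le le_self_add le_add_self

theorem rpow_le_of_le_mul_add {x y z θ : ℝ≥0∞} {γ : ℝ} (hγ : 0 ≤ γ) (h : x ≤ θ * y + z) :
    x ^ γ ≤ (2 * θ) ^ γ * y ^ γ + 2 ^ γ * z ^ γ :=
  calc x ^ γ ≤ (θ * y + z) ^ γ := rpow_le_rpow h hγ
    _ ≤ 2 ^ γ * ((θ * y) ^ γ + z ^ γ) := add_rpow_le_two_rpow_mul _ _ hγ
    _ = (2 * θ) ^ γ * y ^ γ + 2 ^ γ * z ^ γ := by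
        simp only [mul_rpow_of_nonneg _ _ hγ]
        ring

theorem le_inv_one_sub_mul_of_le_add_mul {x a θ : ℝ≥0∞} (hθ : θ < 1) (hx : x ≠ ⊤)
    (h : x ≤ a + θ * x) : x ≤ (1 - θ)⁻¹ * a := by
  have hθ' : 1 - θ ≠ 0 := (tsub_pos_of_lt hθ).ne'
  rw [← mul_le_iff_le_inv hθ' (sub_ne_top one_ne_top), ENNReal.sub_mul fun _ _ => hx, one_mul]
  exact tsub_le_iff_right.2 h

theorem tsum_le_of_le_mul_add {x y : ℕ → ℝ≥0∞} {θ : ℝ≥0∞} (hθ : θ < 1) (hx : ∀ k, x k ≠ ⊤)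
    (h : ∀ k, x (k + 1) ≤ θ * x k + y k) : ∑' k, x k ≤ (1 - θ)⁻¹ * (x 0 + ∑' k, y k) := by
  refine tsum_le_of_sum_range_le fun N => le_inv_one_sub_mul_of_le_add_mul hθ
    (sum_ne_top.2 fun k _ => hx k) ?_
  cases N with
  | zero => simp
  | succ N =>
    calc ∑ k ∈ Finset.range (N + 1), x k = x 0 + ∑ k ∈ Finset.range N, x (k + 1) := by
          rw [Finset.sum_range_succ', add_comm]
      _ ≤ x 0 + ∑ k ∈ Finset.range N, (θ * x k + y k) := by gcongr with k; exact h k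
      _ = x 0 + (θ * ∑ k ∈ Finset.range N, x k + ∑ k ∈ Finset.range N, y k) := by
          rw [Finset.sum_add_distrib, Finset.mul_sum]
      _ ≤ x 0 + (θ * ∑ k ∈ Finset.range (N + 1), x k + ∑' k, y k) := by
          gcongr
          · omega
          · exact ENNReal.sum_le_tsum _
      _ = x 0 + ∑' k, y k + θ * ∑ k ∈ Finset.range (N + 1), x k := by ring

theorem ofReal_rpow_mul_rpow {x : ℝ} (hx : 0 ≤ x) (m : ℝ) {γ : ℝ} (hγ : 0 ≤ γ)
    (y : ℝ≥0∞) :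
    (ENNReal.ofReal (x ^ m) * y) ^ γ = ENNReal.ofReal (x ^ (m * γ)) * y ^ γ := by
  rw [mul_rpow_of_nonneg _ _ hγ, ofReal_rpow_of_nonneg (Real.rpow_nonneg hx _) hγ,
    ← Real.rpow_mul hx]

end ENNReal

theorem setLIntegral_Ico_mul_le {β B x : ℝ} {h : ℝ → ℝ≥0∞} (hβ : 0 ≤ β) (hx : 0 < x)
    (hh : AntitoneOn h (Ioi 0)) :
    ∫⁻ l in Ico x (x * B), ENNReal.ofReal (l ^ β) * h l * ENNReal.ofReal l⁻¹ ≤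
      ENNReal.ofReal (B - 1) * ENNReal.ofReal ((x * B) ^ β) * h x := by
  calc ∫⁻ l in Ico x (x * B), ENNReal.ofReal (l ^ β) * h l * ENNReal.ofReal l⁻¹
      ≤ ∫⁻ _ in Ico x (x * B), ENNReal.ofReal ((x * B) ^ β) * h x * ENNReal.ofReal x⁻¹ := by
        refine setLIntegral_mono' measurableSet_Ico fun l hl => ?_
        have hl0 : 0 < l := hx.trans_le hl.1
        gcongr
        · exact hl.2.le
        · exact hh hx hl0 hl.1
        · exact hl.1
    _ = ENNReal.ofReal (B - 1) * ENNReal.ofReal ((x * B) ^ β) * h x := by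
        rw [setLIntegral_const, Real.volume_Ico, mul_assoc _ (ENNReal.ofReal x⁻¹),
          ← ENNReal.ofReal_mul (inv_nonneg.2 hx.le),
          show x⁻¹ * (x * B - x) = B - 1 by field_simp]
        ring

theorem le_setLIntegral_Ico_mul {β B x : ℝ} {h : ℝ → ℝ≥0∞} (hβ : 0 ≤ β) (hB : 0 < B)
    (hx : 0 < x) (hh : AntitoneOn h (Ioi 0)) :
    ENNReal.ofReal (1 - B⁻¹) * ENNReal.ofReal (x ^ β) * h (x * B) ≤
      ∫⁻ l in Ico x (x * B), ENNReal.ofReal (l ^ β) * h l * ENNReal.ofReal l⁻¹ := by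
  have hxB : 0 < x * B := mul_pos hx hB
  calc ENNReal.ofReal (1 - B⁻¹) * ENNReal.ofReal (x ^ β) * h (x * B)
      = ∫⁻ _ in Ico x (x * B), ENNReal.ofReal (x ^ β) * h (x * B) * ENNReal.ofReal (x * B)⁻¹ := by
        rw [setLIntegral_const, Real.volume_Ico, mul_assoc _ (ENNReal.ofReal (x * B)⁻¹),
          ← ENNReal.ofReal_mul (inv_nonneg.2 hxB.le),
          show (x * B)⁻¹ * (x * B - x) = 1 - B⁻¹ by field_simp]
        ring
    _ ≤ ∫⁻ l in Ico x (x * B), ENNReal.ofReal (l ^ β) * h l * ENNReal.ofReal l⁻¹ := by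
        refine setLIntegral_mono' measurableSet_Ico fun l hl => ?_
        have hl0 : 0 < l := hx.trans_le hl.1
        gcongr
        · exact hl.1
        · exact hh hl0 hxB hl.2.le
        · exact hl.2.le

theorem Ici_subset_iUnion_Ico_mul_pow {a B : ℝ} (ha : 0 < a) (hB : 1 < B) :
    Ici a ⊆ ⋃ n : ℕ, Ico (a * B ^ n) (a * B ^ (n + 1)) := fun x hx => by
  obtain ⟨n, hn, hn'⟩ := exists_nat_pow_near ((one_le_div ha).2 hx) hB
  exact mem_iUnion.2 ⟨n, (le_div_iff₀' ha).1 hn, (div_lt_iff₀' ha).1 hn'⟩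

theorem setLIntegral_Ioc_zero_le {β a : ℝ} {h : ℝ → ℝ≥0∞} {v : ℝ≥0∞} (hβ : 0 < β) (ha : 0 ≤ a)
    (hv : ∀ l ∈ Ioi 0, h l ≤ v) :
    ∫⁻ l in Ioc 0 a, ENNReal.ofReal (l ^ β) * h l * ENNReal.ofReal l⁻¹ ≤
      ENNReal.ofReal (a ^ β / β) * v := by
  have hint : ∫ l in Ioc 0 a, l ^ (β - 1) = a ^ β / β := by
    rw [← intervalIntegral.integral_of_le ha, integral_rpow (by left; linarith), sub_add_cancel,
      Real.zero_rpow hβ.ne', sub_zero]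
  have hintegrable : IntegrableOn (fun l : ℝ => l ^ (β - 1)) (Ioc 0 a) :=
    (intervalIntegrable_iff_integrableOn_Ioc_of_le ha).1
      (intervalIntegral.intervalIntegrable_rpow' (by linarith))
  calc ∫⁻ l in Ioc 0 a, ENNReal.ofReal (l ^ β) * h l * ENNReal.ofReal l⁻¹
      ≤ ∫⁻ l in Ioc 0 a, ENNReal.ofReal (l ^ (β - 1)) * v := by
        refine setLIntegral_mono' measurableSet_Ioc fun l hl => ?_
        rw [mul_right_comm, ← ENNReal.ofReal_mul (Real.rpow_nonneg hl.1.le _),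
          ← div_eq_mul_inv, ← Real.rpow_sub_one hl.1.ne']
        gcongr
        exact hv l hl.1
    _ = ENNReal.ofReal (a ^ β / β) * v := by
        rw [lintegral_mul_const _ (by fun_prop), ← hint,
          ofReal_integral_eq_lintegral_ofReal hintegrable]
        exact ae_restrict_of_forall_mem measurableSet_Ioc fun l hl =>
          Real.rpow_nonneg hl.1.le _

theorem setLIntegral_Ici_le_tsum {β B a : ℝ} {h : ℝ → ℝ≥0∞} (hβ : 0 ≤ β) (hB : 1 < B)
    (ha : 0 < a) (hh : AntitoneOn h (Ioi 0)) :
    ∫⁻ l in Ici a, ENNReal.ofReal (l ^ β) * h l * ENNReal.ofReal l⁻¹ ≤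
      ENNReal.ofReal (B - 1) * ENNReal.ofReal (B ^ β) *
        ∑' n : ℕ, ENNReal.ofReal ((a * B ^ n) ^ β) * h (a * B ^ n) := by
  have hB0 : 0 < B := one_pos.trans hB
  calc ∫⁻ l in Ici a, ENNReal.ofReal (l ^ β) * h l * ENNReal.ofReal l⁻¹
      ≤ ∑' n : ℕ, ∫⁻ l in Ico (a * B ^ n) (a * B ^ (n + 1)),
          ENNReal.ofReal (l ^ β) * h l * ENNReal.ofReal l⁻¹ :=
        (lintegral_mono_set (Ici_subset_iUnion_Ico_mul_pow ha hB)).trans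
          (lintegral_iUnion_le _ _)
    _ ≤ ∑' n : ℕ, ENNReal.ofReal (B - 1) * ENNReal.ofReal (B ^ β) *
          (ENNReal.ofReal ((a * B ^ n) ^ β) * h (a * B ^ n)) := by
        refine ENNReal.tsum_le_tsum fun n => ?_
        rw [pow_succ, ← mul_assoc]
        refine (setLIntegral_Ico_mul_le hβ (by positivity) hh).trans_eq ?_
        rw [Real.mul_rpow (by positivity) hB0.le, ENNReal.ofReal_mul (by positivity)]
        ring
    _ = _ := ENNReal.tsum_mul_left

theorem tsum_le_setLIntegral_Ioi {β B b : ℝ} {h : ℝ → ℝ≥0∞} (hβ : 0 ≤ β) (hB : 1 < B)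
    (hb : 0 < b) (hh : AntitoneOn h (Ioi 0)) :
    ∑' n : ℕ, ENNReal.ofReal ((b * B ^ n) ^ β) * h (b * B ^ (n + 1)) ≤
      (ENNReal.ofReal (1 - B⁻¹))⁻¹ *
        ∫⁻ l in Ioi 0, ENNReal.ofReal (l ^ β) * h l * ENNReal.ofReal l⁻¹ := by
  have hB0 : 0 < B := one_pos.trans hB
  have hw : ENNReal.ofReal (1 - B⁻¹) ≠ 0 := by
    simpa using inv_lt_one_of_one_lt₀ hB
  have hmono : Monotone fun n : ℕ => b * B ^ n := fun _ _ hij =>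
    mul_le_mul_of_nonneg_left (pow_le_pow_right₀ hB.le hij) hb.le
  calc ∑' n : ℕ, ENNReal.ofReal ((b * B ^ n) ^ β) * h (b * B ^ (n + 1))
      ≤ ∑' n : ℕ, (ENNReal.ofReal (1 - B⁻¹))⁻¹ * ∫⁻ l in Ico (b * B ^ n) (b * B ^ (n + 1)),
          ENNReal.ofReal (l ^ β) * h l * ENNReal.ofReal l⁻¹ := by
        refine ENNReal.tsum_le_tsum fun n => ?_
        rw [← ENNReal.mul_le_iff_le_inv hw ofReal_ne_top, ← mul_assoc, pow_succ, ← mul_assoc]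
        exact le_setLIntegral_Ico_mul hβ hB0 (by positivity) hh
    _ = (ENNReal.ofReal (1 - B⁻¹))⁻¹ * ∫⁻ l in ⋃ n : ℕ, Ico (b * B ^ n) (b * B ^ (n + 1)),
          ENNReal.ofReal (l ^ β) * h l * ENNReal.ofReal l⁻¹ := by
        rw [ENNReal.tsum_mul_left,
          lintegral_iUnion (fun _ => measurableSet_Ico)
          (by simpa only [Order.succ_eq_add_one] using hmono.pairwise_disjoint_on_Ico_succ)]
    _ ≤ _ := by
        gcongr
        exact iUnion_subset fun n l hl => (show 0 < b * B ^ n by positivity).trans_le hl.1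

/-- `β⁻¹` comes from the scales below `λ₁`, `(B - 1) B^β` from one upper shell, `(1 - θ)⁻¹` from
the absorption, and `(1 - B⁻¹)⁻¹` from one lower shell. -/
noncomputable def iterationConstant (β B : ℝ) (θ κ : ℝ≥0∞) : ℝ≥0∞ :=
  ENNReal.ofReal β⁻¹ + ENNReal.ofReal (B - 1) * ENNReal.ofReal (B ^ β) * (1 - θ)⁻¹ *
    (1 + κ * (ENNReal.ofReal (1 - B⁻¹))⁻¹)

theorem iterationConstant_ne_top {β B : ℝ} {θ κ : ℝ≥0∞} (hB : 1 < B) (hθ : θ < 1)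
    (hκ : κ ≠ ⊤) : iterationConstant β B θ κ ≠ ⊤ := by
  have hθ' : (1 - θ)⁻¹ ≠ ⊤ := inv_ne_top.2 (tsub_pos_of_lt hθ).ne'
  have hw : (ENNReal.ofReal (1 - B⁻¹))⁻¹ ≠ ⊤ := by
    simpa using inv_lt_one_of_one_lt₀ hB
  unfold iterationConstant
  finiteness

theorem setLIntegral_Ioi_le_of_iteration {β B lam b : ℝ} {h₁ h₂ : ℝ → ℝ≥0∞} {v θ κ : ℝ≥0∞}
    (hβ : 0 < β) (hB : 1 < B) (hlam : 0 < lam) (hb : 0 < b) (hθ : θ < 1) (hv : v ≠ ⊤)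
    (hh₁ : AntitoneOn h₁ (Ioi 0)) (hh₂ : AntitoneOn h₂ (Ioi 0)) (hh₁v : ∀ l ∈ Ioi 0, h₁ l ≤ v)
    (hstep : ∀ k : ℕ, ENNReal.ofReal ((lam * B ^ (k + 1)) ^ β) * h₁ (lam * B ^ (k + 1)) ≤
      θ * (ENNReal.ofReal ((lam * B ^ k) ^ β) * h₁ (lam * B ^ k)) +
        κ * (ENNReal.ofReal ((b * B ^ k) ^ β) * h₂ (b * B ^ (k + 1)))) :
    ∫⁻ l in Ioi 0, ENNReal.ofReal (l ^ β) * h₁ l * ENNReal.ofReal l⁻¹ ≤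
      iterationConstant β B θ κ * (ENNReal.ofReal (lam ^ β) * v +
        ∫⁻ l in Ioi 0, ENNReal.ofReal (l ^ β) * h₂ l * ENNReal.ofReal l⁻¹) := by
  set u := ENNReal.ofReal (lam ^ β) * v
  set I₂ := ∫⁻ l in Ioi 0, ENNReal.ofReal (l ^ β) * h₂ l * ENNReal.ofReal l⁻¹
  set W := κ * (ENNReal.ofReal (1 - B⁻¹))⁻¹
  have hsum : ∑' k : ℕ, ENNReal.ofReal ((lam * B ^ k) ^ β) * h₁ (lam * B ^ k) ≤
      (1 - θ)⁻¹ * (u + W * I₂) := by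
    refine (ENNReal.tsum_le_of_le_mul_add hθ (fun k => ?_) hstep).trans ?_
    · exact mul_ne_top ofReal_ne_top
        (ne_top_of_le_ne_top hv (hh₁v (lam * B ^ k) (mem_Ioi.2 (by positivity))))
    · gcongr
      · simpa [u] using mul_le_mul_right (hh₁v lam hlam) _
      · rw [ENNReal.tsum_mul_left, mul_assoc]
        gcongr
        exact tsum_le_setLIntegral_Ioi hβ.le hB hb hh₂
  have hW : u + W * I₂ ≤ (1 + W) * (u + I₂) :=
    calc u + W * I₂ ≤ u + W * I₂ + (I₂ + W * u) := le_self_add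
      _ = (1 + W) * (u + I₂) := by ring
  calc ∫⁻ l in Ioi 0, ENNReal.ofReal (l ^ β) * h₁ l * ENNReal.ofReal l⁻¹
      ≤ (∫⁻ l in Ioc 0 lam, ENNReal.ofReal (l ^ β) * h₁ l * ENNReal.ofReal l⁻¹) +
          ∫⁻ l in Ici lam, ENNReal.ofReal (l ^ β) * h₁ l * ENNReal.ofReal l⁻¹ := by
        rw [← Ioc_union_Ici_eq_Ioi hlam]
        exact lintegral_union_le _ _ _
    _ ≤ ENNReal.ofReal (lam ^ β / β) * v + ENNReal.ofReal (B - 1) * ENNReal.ofReal (B ^ β) *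
          ∑' k : ℕ, ENNReal.ofReal ((lam * B ^ k) ^ β) * h₁ (lam * B ^ k) :=
        add_le_add (setLIntegral_Ioc_zero_le hβ hlam.le hh₁v)
          (setLIntegral_Ici_le_tsum hβ.le hB hlam hh₁)
    _ ≤ ENNReal.ofReal β⁻¹ * (u + I₂) +
          ENNReal.ofReal (B - 1) * ENNReal.ofReal (B ^ β) * ((1 - θ)⁻¹ * ((1 + W) * (u + I₂))) := by
        rw [div_eq_inv_mul, ENNReal.ofReal_mul (inv_nonneg.2 hβ.le), mul_assoc]
        gcongr
        · exact le_self_add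
        · exact hsum.trans (by gcongr)
    _ = iterationConstant β B θ κ * (u + I₂) := by
        unfold iterationConstant
        ring

theorem setLIntegral_Ioi_ofReal_rpow_mul_rpow {m γ β : ℝ} (hγ : 0 ≤ γ) (hmγ : m * γ = β)
    (g : ℝ → ℝ≥0∞) :
    ∫⁻ l in Ioi 0, (ENNReal.ofReal (l ^ m) * g l) ^ γ * ENNReal.ofReal l⁻¹ =
      ∫⁻ l in Ioi 0, ENNReal.ofReal (l ^ β) * g l ^ γ * ENNReal.ofReal l⁻¹ :=
  setLIntegral_congr_fun measurableSet_Ioi fun l hl => by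
    rw [ENNReal.ofReal_rpow_mul_rpow (le_of_lt hl) m hγ, hmγ]

/-- The `μ₂`-term at scale `k` gets the weight of the left end `ε * lam / B * B ^ k` of the shell
`[ε lam B^(k-1), ε lam B^k)`, the form in which `tsum_le_setLIntegral_Ioi` compares it. -/
theorem iteration_step_rescale {m B c lam ε : ℝ} {μ₁ : ℝ → ℝ} {μ₂ : ℝ → ℝ≥0∞} (hB : 0 < B)
    (hlam : 0 < lam) (hε : 0 < ε) (k : ℕ)
    (h : ENNReal.ofReal (B ^ (m * ((k : ℝ) + 1)) * lam ^ m * μ₁ (B ^ ((k : ℝ) + 1) * lam)) ≤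
      ENNReal.ofReal ((1 / 4) * B ^ (m * (k : ℝ)) * lam ^ m * μ₁ (B ^ (k : ℝ) * lam)) +
        ENNReal.ofReal (c * B ^ (m * (k : ℝ)) * (ε * lam) ^ m) * μ₂ (B ^ (k : ℝ) * ε * lam)) :
    ENNReal.ofReal ((lam * B ^ (k + 1)) ^ m) * ENNReal.ofReal (μ₁ (lam * B ^ (k + 1))) ≤
      ENNReal.ofReal (1 / 4) *
          (ENNReal.ofReal ((lam * B ^ k) ^ m) * ENNReal.ofReal (μ₁ (lam * B ^ k))) +
        ENNReal.ofReal (c * B ^ m) *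
          (ENNReal.ofReal ((ε * lam / B * B ^ k) ^ m) * μ₂ (ε * lam / B * B ^ (k + 1))) := by
  have hk : B ^ (k : ℝ) = B ^ k := Real.rpow_natCast B k
  have hk₁ : B ^ ((k : ℝ) + 1) = B ^ (k + 1) := by exact_mod_cast Real.rpow_natCast B (k + 1)
  have hscale : ∀ x t : ℝ, 0 ≤ x → B ^ (m * t) * x ^ m = (x * B ^ t) ^ m := fun x t hx => by
    rw [Real.mul_rpow hx (Real.rpow_nonneg hB.le _), ← Real.rpow_mul hB.le, mul_comm t,
      mul_comm]
  have e₁ : B ^ (m * ((k : ℝ) + 1)) * lam ^ m * μ₁ (B ^ ((k : ℝ) + 1) * lam) =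
      (lam * B ^ (k + 1)) ^ m * μ₁ (lam * B ^ (k + 1)) := by
    rw [hscale lam _ hlam.le, hk₁, mul_comm _ lam]
  have e₂ : (1 / 4) * B ^ (m * (k : ℝ)) * lam ^ m * μ₁ (B ^ (k : ℝ) * lam) =
      1 / 4 * ((lam * B ^ k) ^ m * μ₁ (lam * B ^ k)) := by
    rw [mul_assoc (1 / 4), hscale lam _ hlam.le, hk, mul_comm _ lam, mul_assoc]
  have e₃ : c * B ^ (m * (k : ℝ)) * (ε * lam) ^ m = (ε * lam / B * B ^ k) ^ m * (c * B ^ m) := by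
    rw [← hk, ← hscale _ _ (by positivity), Real.div_rpow (by positivity) hB.le]
    field_simp
  have e₄ : B ^ (k : ℝ) * ε * lam = ε * lam / B * B ^ (k + 1) := by
    rw [hk, pow_succ]
    field_simp
  calc ENNReal.ofReal ((lam * B ^ (k + 1)) ^ m) * ENNReal.ofReal (μ₁ (lam * B ^ (k + 1)))
      = ENNReal.ofReal (B ^ (m * ((k : ℝ) + 1)) * lam ^ m * μ₁ (B ^ ((k : ℝ) + 1) * lam)) := by
        rw [e₁, ENNReal.ofReal_mul (by positivity)]
    _ ≤ _ := h
    _ = _ := by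
        rw [e₂, e₃, e₄, ENNReal.ofReal_mul (by norm_num), ENNReal.ofReal_mul (by positivity),
          ENNReal.ofReal_mul (by positivity)]
        ring

theorem iteration_step_rpow {m γ β B c lam ε : ℝ} {μ₁ : ℝ → ℝ} {μ₂ : ℝ → ℝ≥0∞}
    (hγ : 0 ≤ γ) (hmγ : m * γ = β) (hB : 0 < B) (hlam : 0 < lam) (hε : 0 < ε) (k : ℕ)
    (h : ENNReal.ofReal (B ^ (m * ((k : ℝ) + 1)) * lam ^ m * μ₁ (B ^ ((k : ℝ) + 1) * lam)) ≤
      ENNReal.ofReal ((1 / 4) * B ^ (m * (k : ℝ)) * lam ^ m * μ₁ (B ^ (k : ℝ) * lam)) +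
        ENNReal.ofReal (c * B ^ (m * (k : ℝ)) * (ε * lam) ^ m) * μ₂ (B ^ (k : ℝ) * ε * lam)) :
    ENNReal.ofReal ((lam * B ^ (k + 1)) ^ β) * ENNReal.ofReal (μ₁ (lam * B ^ (k + 1))) ^ γ ≤
      (2 * ENNReal.ofReal (1 / 4)) ^ γ *
          (ENNReal.ofReal ((lam * B ^ k) ^ β) * ENNReal.ofReal (μ₁ (lam * B ^ k)) ^ γ) +
        2 ^ γ * ENNReal.ofReal (c * B ^ m) ^ γ *
          (ENNReal.ofReal ((ε * lam / B * B ^ k) ^ β) * μ₂ (ε * lam / B * B ^ (k + 1)) ^ γ) := by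
  have h' := ENNReal.rpow_le_of_le_mul_add hγ (iteration_step_rescale hB hlam hε k h)
  rwa [ENNReal.ofReal_rpow_mul_rpow (x := lam * B ^ (k + 1)) (by positivity) m hγ,
    ENNReal.ofReal_rpow_mul_rpow (x := lam * B ^ k) (by positivity) m hγ,
    mul_rpow_of_nonneg (ENNReal.ofReal (c * B ^ m)) _ hγ,
    ENNReal.ofReal_rpow_mul_rpow (x := ε * lam / B * B ^ k) (by positivity) m hγ,
    hmγ, ← mul_assoc (2 ^ γ)] at h'

theorem exists_pos_le_ofReal {K : ℝ≥0∞} (hK : K ≠ ⊤) : ∃ C : ℝ, 0 < C ∧ K ≤ ENNReal.ofReal C :=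
  ⟨K.toReal + 1, by positivity, by
    rw [ENNReal.ofReal_add ENNReal.toReal_nonneg zero_le_one, ofReal_toReal hK]
    exact le_self_add⟩

theorem levelset_iteration_general (m B c β : ℝ) (hm : 0 < m) (hB : 1 < B)
    (hβ : 0 < β) :
    ∃ C : ℝ, 0 < C ∧
      ∀ (V lam₁ ε : ℝ), 0 < V → 0 < lam₁ → 0 < ε →
      ∀ (μ₁ : ℝ → ℝ) (μ₂ : ℝ → ℝ≥0∞),
        (∀ l : ℝ, 0 < l → 0 ≤ μ₁ l ∧ μ₁ l ≤ V) →
        (∀ a b : ℝ, 0 < a → a ≤ b → μ₁ b ≤ μ₁ a) →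
        (∀ a b : ℝ, 0 < a → a ≤ b → μ₂ b ≤ μ₂ a) →
        (∀ k : ℕ,
          ENNReal.ofReal (B ^ (m * ((k : ℝ) + 1)) * lam₁ ^ m * μ₁ (B ^ ((k : ℝ) + 1) * lam₁)) ≤
            ENNReal.ofReal
                ((1 / 4) * B ^ (m * (k : ℝ)) * lam₁ ^ m * μ₁ (B ^ (k : ℝ) * lam₁)) +
              ENNReal.ofReal (c * B ^ (m * (k : ℝ)) * (ε * lam₁) ^ m) *
                μ₂ (B ^ (k : ℝ) * ε * lam₁)) →
        (∫⁻ l in Set.Ioi (0 : ℝ),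
            ENNReal.ofReal (l ^ m * μ₁ l) ^ (β / m) * ENNReal.ofReal l⁻¹) ≤
          ENNReal.ofReal C *
            (ENNReal.ofReal (lam₁ ^ β * V ^ (β / m)) +
              ∫⁻ l in Set.Ioi (0 : ℝ),
                (ENNReal.ofReal (l ^ m) * μ₂ l) ^ (β / m) * ENNReal.ofReal l⁻¹) := by
  set γ := β / m
  have hγ : 0 < γ := div_pos hβ hm
  have hmγ : m * γ = β := mul_div_cancel₀ β hm.ne'
  set θ : ℝ≥0∞ := (2 * ENNReal.ofReal (1 / 4)) ^ γ
  have hθ : θ < 1 := by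
    refine ENNReal.rpow_lt_one ?_ hγ
    rw [← ENNReal.ofReal_ofNat 2, ← ENNReal.ofReal_mul zero_le_two]
    norm_num
  set κ : ℝ≥0∞ := 2 ^ γ * ENNReal.ofReal (c * B ^ m) ^ γ
  obtain ⟨C, hC, hKC⟩ := exists_pos_le_ofReal
    (iterationConstant_ne_top (β := β) (κ := κ) hB hθ (by finiteness))
  refine ⟨C, hC, fun V lam ε hV hlam hε μ₁ μ₂ hμ₁ hμ₁_anti hμ₂_anti hiter => ?_⟩
  have hbound := setLIntegral_Ioi_le_of_iteration (h₁ := fun l => ENNReal.ofReal (μ₁ l) ^ γ)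
    (h₂ := fun l => μ₂ l ^ γ) (v := ENNReal.ofReal V ^ γ) (b := ε * lam / B) hβ hB hlam
    (by positivity) hθ (by finiteness)
    (fun a ha b _ hab => rpow_le_rpow (ofReal_le_ofReal (hμ₁_anti a b ha hab)) hγ.le)
    (fun a ha b _ hab => rpow_le_rpow (hμ₂_anti a b ha hab) hγ.le)
    (fun l hl => rpow_le_rpow (ofReal_le_ofReal (hμ₁ l hl).2) hγ.le)
    fun k => iteration_step_rpow hγ.le hmγ (one_pos.trans hB) hlam hε k (hiter k)
  calc ∫⁻ l in Ioi 0, ENNReal.ofReal (l ^ m * μ₁ l) ^ γ * ENNReal.ofReal l⁻¹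
      = ∫⁻ l in Ioi 0, ENNReal.ofReal (l ^ β) * ENNReal.ofReal (μ₁ l) ^ γ * ENNReal.ofReal l⁻¹ := by
        rw [← setLIntegral_Ioi_ofReal_rpow_mul_rpow hγ.le hmγ]
        exact setLIntegral_congr_fun measurableSet_Ioi fun l hl => by
          rw [ENNReal.ofReal_mul (Real.rpow_nonneg (le_of_lt hl) _)]
    _ ≤ _ := hbound
    _ ≤ _ := by
        rw [setLIntegral_Ioi_ofReal_rpow_mul_rpow hγ.le hmγ,
          ENNReal.ofReal_mul (Real.rpow_nonneg hlam.le _), ofReal_rpow_of_nonneg hV.le hγ.le]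
        gcongr

/-- **level-set iteration lemma.** Let `V > 0`, `m > 0`, `B > 1`, `λ₁ > 0`,
`ε > 0`, `c ≥ 0`, and let `μ₁ : (0,∞) → [0,V]`, `μ₂ : (0,∞) → [0,∞]` be nonincreasing.
If for all integers `k ≥ 0`
`B^{m(k+1)} λ₁^m μ₁(B^{k+1}λ₁) ≤ (1/4) B^{mk} λ₁^m μ₁(B^k λ₁) + c B^{mk} (ελ₁)^m μ₂(B^k ελ₁)`,
then for every `β ∈ (0,∞)` there is `C = C(β,m,B,c)` with
`∫₀^∞ (λ^m μ₁(λ))^{β/m} dλ/λ ≤ C ( λ₁^β V^{β/m} + ∫₀^∞ (λ^m μ₂(λ))^{β/m} dλ/λ )`. -/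
theorem levelset_iteration (m B c β : ℝ) (hm : 0 < m) (hB : 1 < B) (hc : 0 ≤ c)
    (hβ : 0 < β) :
    ∃ C : ℝ, 0 < C ∧
      ∀ (V lam₁ ε : ℝ), 0 < V → 0 < lam₁ → 0 < ε →
      ∀ (μ₁ : ℝ → ℝ) (μ₂ : ℝ → ℝ≥0∞),
        (∀ l : ℝ, 0 < l → 0 ≤ μ₁ l ∧ μ₁ l ≤ V) →
        (∀ a b : ℝ, 0 < a → a ≤ b → μ₁ b ≤ μ₁ a) →
        (∀ a b : ℝ, 0 < a → a ≤ b → μ₂ b ≤ μ₂ a) →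
        (∀ k : ℕ,
          ENNReal.ofReal (B ^ (m * ((k : ℝ) + 1)) * lam₁ ^ m * μ₁ (B ^ ((k : ℝ) + 1) * lam₁)) ≤
            ENNReal.ofReal
                ((1 / 4) * B ^ (m * (k : ℝ)) * lam₁ ^ m * μ₁ (B ^ (k : ℝ) * lam₁)) +
              ENNReal.ofReal (c * B ^ (m * (k : ℝ)) * (ε * lam₁) ^ m) *
                μ₂ (B ^ (k : ℝ) * ε * lam₁)) →
        (∫⁻ l in Set.Ioi (0 : ℝ),
            ENNReal.ofReal (l ^ m * μ₁ l) ^ (β / m) * ENNReal.ofReal l⁻¹) ≤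
          ENNReal.ofReal C *
            (ENNReal.ofReal (lam₁ ^ β * V ^ (β / m)) +
              ∫⁻ l in Set.Ioi (0 : ℝ),
                (ENNReal.ofReal (l ^ m) * μ₂ l) ^ (β / m) * ENNReal.ofReal l⁻¹) :=
  levelset_iteration_general m B c β hm hB hβ
end
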